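/- arXiv:2005.08262 — 3 statements merged into one kernel-verified Lean document; each statement's English description precedes it below -/
import Mathlib

section
/- Suppose a double series ∑_{m,n≥0} ((m+n)!/((m!)²(n!)³)) (a₁(m,n) + a₂(m,n)z + a₃(m,n)z²) z^{m+2n} is given, where the coefficient families satisfy: (i) (m+n)a₁(m,n) + m²a₁(m−1,n) + n³a₁(m,n−1) = 0 for all m,n ≥ 1; (ii) a₁(m,0) + m·a₂(m−1,0) = 0 for all m ≥ 1; (iii) a₁(0,n) + n²·a₃(0,n−1) = 0 for all n ≥ 1; (iv) a₁(0,0) = 0; and (v) a₂(m,n) = a₁(m+1,n)·(−1/(m+1)) for all m ≥ 0, n ≥ 0 and a₃(m,n) = a₁(m,n+1)·(−1/(n+1)²) for all m ≥ 0, n ≥ 0. Then the full double series vanishes identically as a formal power series in z. -/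
open scoped BigOperators Classical

/-- The combinatorial factor `(m+n)!/((m!)²(n!)³)`. -/
noncomputable def dblFactor (m n : ℕ) : ℂ :=
  ((m + n).factorial : ℂ) / (((m.factorial : ℂ)) ^ 2 * ((n.factorial : ℂ)) ^ 3)

/-- The coefficient of `z^N` contributed by the family `a` with shift `off`
in the double series `∑_{m,n} dblFactor m n · a m n · z^{m+2n+off}`. -/
noncomputable def dblSeriesCoeff (a : ℕ → ℕ → ℂ) (off N : ℕ) : ℂ :=
  ∑ m ∈ Finset.range (N + 1), ∑ n ∈ Finset.range (N + 1),
    if m + 2 * n + off = N then dblFactor m n * a m n else 0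


lemma factC_ne (k : ℕ) : ((k.factorial : ℂ)) ≠ 0 :=
  Nat.cast_ne_zero.mpr k.factorial_ne_zero

lemma dblFactor_succ_m (m n : ℕ) :
    dblFactor m n / ((m : ℂ) + 1)
      = (((m : ℂ) + 1) / ((m : ℂ) + n + 1)) * dblFactor (m + 1) n := by
  unfold dblFactor
  rw [show m + 1 + n = (m + n) + 1 by ring, Nat.factorial_succ, Nat.factorial_succ]
  have h1 := factC_ne (m + n)
  have h2 := factC_ne m
  have h3 := factC_ne n
  have h4 : ((m : ℂ) + 1) ≠ 0 := Nat.cast_add_one_ne_zero m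
  have h5 : ((m : ℂ) + n + 1) ≠ 0 := by
    have e : ((m : ℂ) + n + 1) = ((m + n + 1 : ℕ) : ℂ) := by push_cast; ring
    rw [e]; exact Nat.cast_ne_zero.mpr (by omega)
  push_cast
  field_simp

lemma dblFactor_succ_n (m n : ℕ) :
    dblFactor m n / (((n : ℂ) + 1) ^ 2)
      = (((n : ℂ) + 1) / ((m : ℂ) + n + 1)) * dblFactor m (n + 1) := by
  unfold dblFactor
  rw [show m + (n + 1) = (m + n) + 1 by ring, Nat.factorial_succ, Nat.factorial_succ]
  have h1 := factC_ne (m + n)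
  have h2 := factC_ne m
  have h3 := factC_ne n
  have h4 : ((n : ℂ) + 1) ≠ 0 := Nat.cast_add_one_ne_zero n
  have h5 : ((m : ℂ) + n + 1) ≠ 0 := by
    have e : ((m : ℂ) + n + 1) = ((m + n + 1 : ℕ) : ℂ) := by push_cast; ring
    rw [e]; exact Nat.cast_ne_zero.mpr (by omega)
  push_cast
  field_simp

lemma shift_m (f : ℕ → ℕ → ℂ) (N : ℕ) :
    (∑ m ∈ Finset.range (N + 1), ∑ n ∈ Finset.range (N + 1),
        if m + 2 * n + 1 = N then f (m + 1) n else 0)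
    = ∑ m ∈ Finset.range (N + 1), ∑ n ∈ Finset.range (N + 1),
        if m + 2 * n = N ∧ 1 ≤ m then f m n else 0 := by
  rw [Finset.sum_range_succ]
  conv_rhs => rw [Finset.sum_range_succ']
  have hL : (∑ n ∈ Finset.range (N + 1),
      if N + 2 * n + 1 = N then f (N + 1) n else 0) = 0 := by
    apply Finset.sum_eq_zero; intro n _
    rw [if_neg (by omega)]
  have hR : (∑ n ∈ Finset.range (N + 1),
      if 0 + 2 * n = N ∧ 1 ≤ 0 then f 0 n else 0) = 0 := by
    apply Finset.sum_eq_zero; intro n _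
    rw [if_neg (by omega)]
  rw [hL, hR, add_zero, add_zero]
  apply Finset.sum_congr rfl
  intro m _
  apply Finset.sum_congr rfl
  intro n _
  by_cases h : m + 2 * n + 1 = N
  · rw [if_pos h, if_pos (by omega)]
  · rw [if_neg h, if_neg (by omega)]

lemma shift_n (f : ℕ → ℕ → ℂ) (N : ℕ) :
    (∑ m ∈ Finset.range (N + 1), ∑ n ∈ Finset.range (N + 1),
        if m + 2 * n + 2 = N then f m (n + 1) else 0)
    = ∑ m ∈ Finset.range (N + 1), ∑ n ∈ Finset.range (N + 1),
        if m + 2 * n = N ∧ 1 ≤ n then f m n else 0 := by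
  apply Finset.sum_congr rfl
  intro m _
  rw [Finset.sum_range_succ]
  conv_rhs => rw [Finset.sum_range_succ']
  have hL : (if m + 2 * N + 2 = N then f m (N + 1) else 0) = 0 := by
    rw [if_neg (by omega)]
  have hR : (if m + 2 * 0 = N ∧ 1 ≤ 0 then f m 0 else 0) = 0 := by
    rw [if_neg (by omega)]
  rw [hL, hR, add_zero, add_zero]
  apply Finset.sum_congr rfl
  intro n _
  by_cases h : m + 2 * n + 2 = N
  · rw [if_pos h, if_pos (by omega)]
  · rw [if_neg h, if_neg (by omega)]

/-- Vanishing of the double series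
`∑_{m,n≥0} ((m+n)!/((m!)²(n!)³))(a₁(m,n) + a₂(m,n)z + a₃(m,n)z²) z^{m+2n}`
as a formal power series in `z`, under the cancellation scheme:
(i) `(m+n)a₁(m,n) + m²a₁(m−1,n) + n³a₁(m,n−1) = 0` for `m,n ≥ 1`;
(ii) `a₁(m,0) + m·a₂(m−1,0) = 0` for `m ≥ 1`;
(iii) `a₁(0,n) + n²·a₃(0,n−1) = 0` for `n ≥ 1`;
(iv) `a₁(0,0) = 0`; together with
`a₂(m,n) = −a₁(m+1,n)/(m+1)` and `a₃(m,n) = −a₁(m,n+1)/(n+1)²`.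
Then every coefficient of `z^N` vanishes. -/
theorem double_series_vanishes (a₁ a₂ a₃ : ℕ → ℕ → ℂ)
    (h₁ : ∀ m n : ℕ, 1 ≤ m → 1 ≤ n →
      ((m : ℂ) + n) * a₁ m n + (m : ℂ) ^ 2 * a₁ (m - 1) n +
        (n : ℂ) ^ 3 * a₁ m (n - 1) = 0)
    (h₂ : ∀ m : ℕ, 1 ≤ m → a₁ m 0 + (m : ℂ) * a₂ (m - 1) 0 = 0)
    (h₃ : ∀ n : ℕ, 1 ≤ n → a₁ 0 n + (n : ℂ) ^ 2 * a₃ 0 (n - 1) = 0)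
    (h₄ : a₁ 0 0 = 0)
    (ha₂ : ∀ m n : ℕ, a₂ m n = -a₁ (m + 1) n / ((m : ℂ) + 1))
    (ha₃ : ∀ m n : ℕ, a₃ m n = -a₁ m (n + 1) / ((n : ℂ) + 1) ^ 2) :
    ∀ N : ℕ,
      dblSeriesCoeff a₁ 0 N + dblSeriesCoeff a₂ 1 N + dblSeriesCoeff a₃ 2 N = 0 := by
  intro N
  have E2 : dblSeriesCoeff a₂ 1 N
      = ∑ m ∈ Finset.range (N + 1), ∑ n ∈ Finset.range (N + 1),
          if m + 2 * n = N ∧ 1 ≤ m then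
            -((m : ℂ) / ((m : ℂ) + n)) * (dblFactor m n * a₁ m n) else 0 := by
    rw [dblSeriesCoeff,
      ← shift_m (fun u v => -((u : ℂ) / ((u : ℂ) + v)) * (dblFactor u v * a₁ u v)) N]
    apply Finset.sum_congr rfl; intro m _
    apply Finset.sum_congr rfl; intro n _
    by_cases h : m + 2 * n + 1 = N
    · rw [if_pos h, if_pos h, ha₂ m n]
      have key := dblFactor_succ_m m n
      push_cast
      linear_combination (-a₁ (m + 1) n) * key
    · rw [if_neg h, if_neg h]
  have E3 : dblSeriesCoeff a₃ 2 N
      = ∑ m ∈ Finset.range (N + 1), ∑ n ∈ Finset.range (N + 1),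
          if m + 2 * n = N ∧ 1 ≤ n then
            -((n : ℂ) / ((m : ℂ) + n)) * (dblFactor m n * a₁ m n) else 0 := by
    rw [dblSeriesCoeff,
      ← shift_n (fun u v => -((v : ℂ) / ((u : ℂ) + v)) * (dblFactor u v * a₁ u v)) N]
    apply Finset.sum_congr rfl; intro m _
    apply Finset.sum_congr rfl; intro n _
    by_cases h : m + 2 * n + 2 = N
    · rw [if_pos h, if_pos h, ha₃ m n]
      have key := dblFactor_succ_n m n
      push_cast
      linear_combination (-a₁ m (n + 1)) * key
    · rw [if_neg h, if_neg h]
  rw [dblSeriesCoeff, E2, E3, ← Finset.sum_add_distrib, ← Finset.sum_add_distrib]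
  apply Finset.sum_eq_zero; intro m _
  rw [← Finset.sum_add_distrib, ← Finset.sum_add_distrib]
  apply Finset.sum_eq_zero; intro n _
  by_cases hmn : m + 2 * n = N
  · rw [if_pos (by omega)]
    by_cases hm : 1 ≤ m <;> by_cases hn : 1 ≤ n
    · rw [if_pos ⟨hmn, hm⟩, if_pos ⟨hmn, hn⟩]
      have h5 : ((m : ℂ) + n) ≠ 0 := by
        have e : ((m : ℂ) + n) = ((m + n : ℕ) : ℂ) := by push_cast; ring
        rw [e]; exact Nat.cast_ne_zero.mpr (by omega)
      field_simp
      ring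
    · rw [if_pos ⟨hmn, hm⟩, if_neg (by tauto)]
      have hn0 : n = 0 := by omega
      subst hn0
      have hm0 : ((m : ℂ)) ≠ 0 := Nat.cast_ne_zero.mpr (by omega)
      push_cast
      field_simp
      rw [add_zero, add_zero, div_self hm0, add_neg_cancel, mul_zero]
    · rw [if_neg (by tauto), if_pos ⟨hmn, hn⟩]
      have hm0 : m = 0 := by omega
      subst hm0
      have hn0 : ((n : ℂ)) ≠ 0 := Nat.cast_ne_zero.mpr (by omega)
      push_cast
      field_simp
      rw [zero_add, add_zero, mul_div_assoc, div_self hn0, mul_one, add_neg_cancel]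
    · rw [if_neg (by tauto), if_neg (by tauto)]
      have hm0 : m = 0 := by omega
      have hn0 : n = 0 := by omega
      subst hm0; subst hn0
      simp [h₄]
  · rw [if_neg (by omega), if_neg (by tauto), if_neg (by tauto)]
    simp
end

section
/- Let S be the 4×4 upper-triangular integer matrix with rows (1,2,−1,−3), (0,1,1,−1), (0,0,1,2), (0,0,0,1), let η be the 4×4 matrix with rows (0,0,0,1),(0,1,1,0),(0,1,0,0),(1,0,0,0) [the Poincaré pairing of 𝔽₁ with k=1], let μ = diag(−1,0,0,1), and let R be the 4×4 nilpotent matrix with rows (0,0,0,0),(2,0,0,0),(1,0,0,0),(0,3,2,0). Then with C the explicit central connection matrix of 𝔽₁ given by C = [[1/(2π), −1/(2π), 1/(2π), −1/(2π)], [γ/π, −γ/π, i+γ/π, −i−γ/π], [(−i+γ/π)/2, −(γ+iπ)/(2π), (−i+γ/π)/2, −(γ+iπ)/(2π)], [γ(−i+2γ/π), γ(−i−2γ/π), 2γ(γ+iπ)/π, −2(γ+iπ)²/π]], the identity S = C^{−1} exp(−πiR) exp(−πiμ) η^{−1} (C^T)^{−1} holds. -/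
/-!
Clearing the factor `π⁻¹` from `C`, the identity `C S Cᵀ = e^{-πiR} e^{-πiμ} η⁻¹` becomes a
polynomial identity in `γ`, `π` and `i`, checked entry by entry. The two exponentials are explicit:
`R³ = 0` truncates the series of `e^{-πiR}` after the quadratic term, and `e^{-πiμ}` is
`diag(e^{πi}, 1, 1, e^{-πi})`. Since `det (C S Cᵀ) = (det C)² det S` and the right-hand side is
invertible, `C` is invertible, and solving for `S` gives the constraint.
-/

open Complex Matrix

open Nat in
theorem NormedSpace.exp_eq_sum_range_of_pow_eq_zero {𝔸 : Type*} [Ring 𝔸] [Algebra ℚ 𝔸]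
    [TopologicalSpace 𝔸] [IsTopologicalRing 𝔸] {a : 𝔸} {n : ℕ} (h : a ^ n = 0) :
    NormedSpace.exp a = ∑ k ∈ Finset.range n, (k !⁻¹ : ℚ) • a ^ k := by
  rw [NormedSpace.exp_eq_tsum_rat]
  refine tsum_eq_sum fun k hk => ?_
  rw [pow_eq_zero_of_le (by simpa using hk) h, smul_zero]

theorem Matrix.eq_inv_mul_mul_inv_transpose_of_mul_mul_transpose_eq {n R : Type*} [Fintype n]
    [DecidableEq n] [CommRing R] {C S M : Matrix n n R} (hM : IsUnit M) (h : C * S * Cᵀ = M) :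
    S = C⁻¹ * M * Cᵀ⁻¹ := by
  have hC : IsUnit C.det := by
    rw [← h, isUnit_iff_isUnit_det, det_mul, det_mul, det_transpose] at hM
    exact isUnit_of_mul_isUnit_left (isUnit_of_mul_isUnit_left hM)
  rw [← h, Matrix.mul_assoc, Matrix.mul_assoc, mul_nonsing_inv _ (isUnit_det_transpose _ hC),
    Matrix.mul_one]
  exact (nonsing_inv_mul_cancel_left C S hC).symm

namespace Hirzebruch₁

local notation "π" => (Real.pi : ℂ)

def stokesMatrix : Matrix (Fin 4) (Fin 4) ℂ :=
  !![1, 2, -1, -3; 0, 1, 1, -1; 0, 0, 1, 2; 0, 0, 0, 1]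

def pairingMatrix : Matrix (Fin 4) (Fin 4) ℂ :=
  !![0, 0, 0, 1; 0, 1, 1, 0; 0, 1, 0, 0; 1, 0, 0, 0]

def gradingMatrix : Matrix (Fin 4) (Fin 4) ℂ :=
  !![-1, 0, 0, 0; 0, 0, 0, 0; 0, 0, 0, 0; 0, 0, 0, 1]

def chernMatrix : Matrix (Fin 4) (Fin 4) ℂ :=
  !![0, 0, 0, 0; 2, 0, 0, 0; 1, 0, 0, 0; 0, 3, 2, 0]

noncomputable def connectionMatrix (γ : ℂ) : Matrix (Fin 4) (Fin 4) ℂ :=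
  !![1 / (2 * π), -(1 / (2 * π)), 1 / (2 * π), -(1 / (2 * π));
     γ / π, -(γ / π), I + γ / π, -I - γ / π;
     (-I + γ / π) / 2, -((γ + I * π) / (2 * π)), (-I + γ / π) / 2, -((γ + I * π) / (2 * π));
     γ * (-I + 2 * γ / π), γ * (-I - 2 * γ / π), 2 * γ * (γ + I * π) / π,
       -(2 * (γ + I * π) ^ 2 / π)]

theorem chernMatrix_sq :
    chernMatrix ^ 2 = !![0, 0, 0, 0; 0, 0, 0, 0; 0, 0, 0, 0; 8, 0, 0, 0] := by
  ext i j
  fin_cases i <;> fin_cases j <;> simp [chernMatrix, sq, mul_apply, Fin.sum_univ_four]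
  norm_num

theorem chernMatrix_pow_three : chernMatrix ^ 3 = 0 := by
  rw [pow_succ, chernMatrix_sq]
  ext i j
  fin_cases i <;> fin_cases j <;> simp [chernMatrix, mul_apply, Fin.sum_univ_four]

theorem exp_smul_chernMatrix (t : ℂ) :
    NormedSpace.exp (t • chernMatrix) =
      !![1, 0, 0, 0; 2 * t, 1, 0, 0; t, 0, 1, 0; 4 * t ^ 2, 3 * t, 2 * t, 1] := by
  rw [NormedSpace.exp_eq_sum_range_of_pow_eq_zero (n := 3)
    (by rw [smul_pow, chernMatrix_pow_three, smul_zero])]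
  simp only [Finset.sum_range_succ, Finset.sum_range_zero, smul_pow, chernMatrix_sq]
  ext i j
  fin_cases i <;> fin_cases j <;> norm_num [chernMatrix, Rat.smul_def] <;> ring

theorem exp_smul_gradingMatrix (t : ℂ) :
    NormedSpace.exp (t • gradingMatrix) = diagonal ![cexp (-t), 1, 1, cexp t] := by
  have : t • gradingMatrix = diagonal ![-t, 0, 0, t] := by
    ext i j
    fin_cases i <;> fin_cases j <;> simp [gradingMatrix]
  rw [this, exp_diagonal]
  congr 1
  ext i
  fin_cases i <;> simp [← Complex.exp_eq_exp_ℂ]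

theorem pairingMatrix_mul_eq_one :
    pairingMatrix * !![0, 0, 0, 1; 0, 0, 1, 0; 0, 1, -1, 0; 1, 0, 0, 0] = 1 := by
  ext i j
  fin_cases i <;> fin_cases j <;> simp [pairingMatrix, mul_apply, Fin.sum_univ_four]

theorem pairingMatrix_inv :
    pairingMatrix⁻¹ = !![0, 0, 0, 1; 0, 0, 1, 0; 0, 1, -1, 0; 1, 0, 0, 0] :=
  inv_eq_right_inv pairingMatrix_mul_eq_one

theorem isUnit_pairingMatrix : IsUnit pairingMatrix :=
  (isUnit_iff_isUnit_det _).2 (isUnit_det_of_right_inverse pairingMatrix_mul_eq_one)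

theorem connectionMatrix_mul_stokesMatrix_mul_transpose (γ : ℂ) :
    connectionMatrix γ * stokesMatrix * (connectionMatrix γ)ᵀ =
      NormedSpace.exp ((-(π * I)) • chernMatrix) * NormedSpace.exp ((-(π * I)) • gradingMatrix) *
        pairingMatrix⁻¹ := by
  have hπ : π ≠ 0 := ofReal_ne_zero.2 Real.pi_ne_zero
  rw [exp_smul_chernMatrix, exp_smul_gradingMatrix, pairingMatrix_inv, neg_neg, exp_neg,
    exp_pi_mul_I]
  ext i j
  fin_cases i <;> fin_cases j <;>
    simp [connectionMatrix, stokesMatrix, mul_apply, vecMul_diagonal, Fin.sum_univ_four] <;>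
    field_simp <;> ring_nf <;> (try simp only [I_sq, I_pow_three, I_pow_four]) <;> ring

end Hirzebruch₁

/-- The monodromy-data constraint `S = C⁻¹ e^{−πiR} e^{−πiμ} η⁻¹ (Cᵀ)⁻¹` verified
for the computed monodromy data of the Hirzebruch surface `𝔽₁`, where `S` is the
Stokes matrix, `η` the Poincaré pairing, `μ = diag(−1,0,0,1)` the grading matrix,
`R` the matrix of cup product with `c₁(𝔽₁)`, and `C` the explicit central
connection matrix.  The identity holds with the Euler–Mascheroni constant
treated as an indeterminate, i.e. for every `γ : ℂ`. -/
theorem F1_monodromy_data_constraint (γ : ℂ) :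
    (!![1, 2, -1, -3; 0, 1, 1, -1; 0, 0, 1, 2; 0, 0, 0, 1] :
        Matrix (Fin 4) (Fin 4) ℂ) =
      (!![1 / (2 * (Real.pi : ℂ)), -(1 / (2 * (Real.pi : ℂ))),
            1 / (2 * (Real.pi : ℂ)), -(1 / (2 * (Real.pi : ℂ)));
          γ / (Real.pi : ℂ), -(γ / (Real.pi : ℂ)),
            I + γ / (Real.pi : ℂ), -I - γ / (Real.pi : ℂ);
          (-I + γ / (Real.pi : ℂ)) / 2,
            -((γ + I * (Real.pi : ℂ)) / (2 * (Real.pi : ℂ))),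
            (-I + γ / (Real.pi : ℂ)) / 2,
            -((γ + I * (Real.pi : ℂ)) / (2 * (Real.pi : ℂ)));
          γ * (-I + 2 * γ / (Real.pi : ℂ)), γ * (-I - 2 * γ / (Real.pi : ℂ)),
            2 * γ * (γ + I * (Real.pi : ℂ)) / (Real.pi : ℂ),
            -(2 * (γ + I * (Real.pi : ℂ)) ^ 2 / (Real.pi : ℂ))] :
          Matrix (Fin 4) (Fin 4) ℂ)⁻¹ *
        NormedSpace.exp
          ((-((Real.pi : ℂ) * I)) •
            (!![0, 0, 0, 0; 2, 0, 0, 0; 1, 0, 0, 0; 0, 3, 2, 0] :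
              Matrix (Fin 4) (Fin 4) ℂ)) *
        NormedSpace.exp
          ((-((Real.pi : ℂ) * I)) •
            (!![-1, 0, 0, 0; 0, 0, 0, 0; 0, 0, 0, 0; 0, 0, 0, 1] :
              Matrix (Fin 4) (Fin 4) ℂ)) *
        (!![0, 0, 0, 1; 0, 1, 1, 0; 0, 1, 0, 0; 1, 0, 0, 0] :
            Matrix (Fin 4) (Fin 4) ℂ)⁻¹ *
        ((!![1 / (2 * (Real.pi : ℂ)), -(1 / (2 * (Real.pi : ℂ))),
              1 / (2 * (Real.pi : ℂ)), -(1 / (2 * (Real.pi : ℂ)));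
            γ / (Real.pi : ℂ), -(γ / (Real.pi : ℂ)),
              I + γ / (Real.pi : ℂ), -I - γ / (Real.pi : ℂ);
            (-I + γ / (Real.pi : ℂ)) / 2,
              -((γ + I * (Real.pi : ℂ)) / (2 * (Real.pi : ℂ))),
              (-I + γ / (Real.pi : ℂ)) / 2,
              -((γ + I * (Real.pi : ℂ)) / (2 * (Real.pi : ℂ)));
            γ * (-I + 2 * γ / (Real.pi : ℂ)), γ * (-I - 2 * γ / (Real.pi : ℂ)),
              2 * γ * (γ + I * (Real.pi : ℂ)) / (Real.pi : ℂ),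
              -(2 * (γ + I * (Real.pi : ℂ)) ^ 2 / (Real.pi : ℂ))] :
            Matrix (Fin 4) (Fin 4) ℂ)ᵀ)⁻¹ := by
  open Hirzebruch₁ in
  have hM : IsUnit (NormedSpace.exp ((-((Real.pi : ℂ) * I)) • chernMatrix) *
      NormedSpace.exp ((-((Real.pi : ℂ) * I)) • gradingMatrix) * pairingMatrix⁻¹) :=
    ((isUnit_exp _).mul (isUnit_exp _)).mul
      (isUnit_nonsing_inv_iff.2 isUnit_pairingMatrix)
  have h := eq_inv_mul_mul_inv_transpose_of_mul_mul_transpose_eq hM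
    (Hirzebruch₁.connectionMatrix_mul_stokesMatrix_mul_transpose γ)
  simp only [Matrix.mul_assoc] at h ⊢
  -- `h` differs from the goal only by the unfolding of the `Hirzebruch₁` definitions.
  exact h
end

section
/- For the braid group action on pairs (U, C) ∈ 𝒰_n × GL(n,ℂ) defined by β_i · (U, C) = (A^{β_i}(U) · U · A^{β_i}(U), C · A^{β_i}(U)^{−1}), where A^{β_i}(U) is the matrix with (A^{β_i}(U))_{hh} = 1 for h ∉ {i, i+1}, (A^{β_i}(U))_{i+1,i+1} = −U_{i,i+1}, (A^{β_i}(U))_{i,i+1} = (A^{β_i}(U))_{i+1,i} = 1, and all other entries zero, the transformed matrix A^{β_i}(U) · U · A^{β_i}(U) again lies in 𝒰_n (upper triangular with 1's on the diagonal). -/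
open scoped Classical

/-- The matrix `A^{β_i}(U)` of the braid group action: it equals the identity in
rows/columns outside `{i, i+1}`, while in the 2×2 block at `(i, i+1)` it is
`[[0, 1], [1, −U_{i,i+1}]]`. -/
noncomputable def braidMatrix {n : ℕ} (U : Matrix (Fin n) (Fin n) ℂ)
    (i : Fin n) (hi : (i : ℕ) + 1 < n) : Matrix (Fin n) (Fin n) ℂ :=
  Matrix.of fun h k =>
    if h = i ∧ k = (⟨(i : ℕ) + 1, hi⟩ : Fin n) then 1
    else if h = (⟨(i : ℕ) + 1, hi⟩ : Fin n) ∧ k = i then 1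
    else if h = (⟨(i : ℕ) + 1, hi⟩ : Fin n) ∧ k = (⟨(i : ℕ) + 1, hi⟩ : Fin n) then
      -U i (⟨(i : ℕ) + 1, hi⟩ : Fin n)
    else if h = k ∧ h ≠ i ∧ h ≠ (⟨(i : ℕ) + 1, hi⟩ : Fin n) then 1
    else 0

/-- Closure of the set `𝒰_n` of upper triangular matrices with unit diagonal
under the braid group action `U ↦ A^{β_i}(U)·U·A^{β_i}(U)`: if `U` is upper
triangular with `1`'s on the diagonal, then so is `A^{β_i}(U)·U·A^{β_i}(U)`. -/
theorem braid_action_preserves_unipotent {n : ℕ}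
    (U : Matrix (Fin n) (Fin n) ℂ) (i : Fin n) (hi : (i : ℕ) + 1 < n)
    (hUtri : ∀ a b : Fin n, b < a → U a b = 0)
    (hUdiag : ∀ a : Fin n, U a a = 1) :
    (∀ a b : Fin n, b < a → (braidMatrix U i hi * U * braidMatrix U i hi) a b = 0) ∧
      (∀ a : Fin n, (braidMatrix U i hi * U * braidMatrix U i hi) a a = 1) := by
  obtain ⟨j, hjdef⟩ : ∃ j : Fin n, (⟨(i : ℕ) + 1, hi⟩ : Fin n) = j := ⟨_, rfl⟩
  have hjval : (j : ℕ) = (i : ℕ) + 1 := by rw [← hjdef]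
  have hij : i ≠ j := by intro h; rw [h] at hjval; omega
  have hfe : ∀ x y : Fin n, (x = y) = ((x : ℕ) = (y : ℕ)) := by
    intro x y; rw [Fin.ext_iff]
  have hA : ∀ a h, braidMatrix U i hi a h =
      if a = i then (if h = j then (1:ℂ) else 0)
      else if a = j then (if h = i then 1 else 0) + (if h = j then -U i j else 0)
      else (if h = a then 1 else 0) := by
    intro a h
    simp only [braidMatrix, Matrix.of_apply, ne_eq]
    simp only [hfe]
    split_ifs <;> first | rfl | (exfalso; omega) | (rw [hjdef]; ring) | ring
  have hP : ∀ (M : Matrix (Fin n) (Fin n) ℂ) a b, (braidMatrix U i hi * M) a b =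
      if a = i then M j b else if a = j then M i b - U i j * M j b else M a b := by
    intro M a b
    simp only [Matrix.mul_apply, hA]
    by_cases ha : a = i
    · simp [ha, ite_mul, Finset.sum_ite_eq', if_neg hij]
    · by_cases ha' : a = j
      · simp [ha, ha', add_mul, ite_mul, Finset.sum_add_distrib, Finset.sum_ite_eq']
        ring
      · simp [ha, ha', ite_mul, Finset.sum_ite_eq']
  have hQ : ∀ (M : Matrix (Fin n) (Fin n) ℂ) a b, (M * braidMatrix U i hi) a b =
      if b = i then M a j else if b = j then M a i - U i j * M a j else M a b := by
    intro M a b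
    simp only [Matrix.mul_apply, hA]
    by_cases hb : b = i
    · have hbv : (b : ℕ) = (i : ℕ) := by rw [hb]
      have key : ∀ h : Fin n, (if h = i then (if b = j then (1:ℂ) else 0)
          else if h = j then (if b = i then 1 else 0) + (if b = j then -U i j else 0)
          else (if b = h then 1 else 0)) = if h = j then 1 else 0 := by
        intro h
        simp only [hfe]
        split_ifs <;> first | rfl | (exfalso; omega) | ring
      simp only [key]
      simp [hb, mul_ite, Finset.sum_ite_eq']
    · by_cases hb' : b = j
      · have hbv : (b : ℕ) = (j : ℕ) := by rw [hb']
        have key : ∀ h : Fin n, (if h = i then (if b = j then (1:ℂ) else 0)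
            else if h = j then (if b = i then 1 else 0) + (if b = j then -U i j else 0)
            else (if b = h then 1 else 0)) =
            (if h = i then 1 else 0) + (if h = j then -U i j else 0) := by
          intro h
          simp only [hfe]
          split_ifs <;> first | rfl | (exfalso; omega) | ring
        simp only [key]
        simp [hb, hb', Ne.symm hij, mul_add, mul_ite, Finset.sum_add_distrib,
          Finset.sum_ite_eq']
        try ring
      · have hbvi : (b : ℕ) ≠ (i : ℕ) := fun h => hb (Fin.ext h)
        have hbvj : (b : ℕ) ≠ (j : ℕ) := fun h => hb' (Fin.ext h)
        have key : ∀ h : Fin n, (if h = i then (if b = j then (1:ℂ) else 0)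
            else if h = j then (if b = i then 1 else 0) + (if b = j then -U i j else 0)
            else (if b = h then 1 else 0)) = if h = b then 1 else 0 := by
          intro h
          simp only [hfe]
          split_ifs <;> first | rfl | (exfalso; omega) | ring
        simp only [key]
        simp [hb, hb', mul_ite, Finset.sum_ite_eq']
  constructor
  · intro a b hba
    have hba' : (b : ℕ) < (a : ℕ) := hba
    rw [hQ, hP, hP, hP]
    by_cases hbi : b = i
    · have hbv : (b : ℕ) = (i : ℕ) := by rw [hbi]
      by_cases haj : a = j
      · have hai : ¬a = i := by intro h; exact hij (h ▸ haj)
        simp [hbi, haj, hai, Ne.symm hij, hUdiag,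
          hUtri j i (show i < j by rw [Fin.lt_def]; omega)]
        try ring
      · have hai : ¬a = i := by intro h; rw [h] at hba'; omega
        have hav : (a : ℕ) ≠ (j : ℕ) := fun h => haj (Fin.ext h)
        have hja : j < a := by rw [Fin.lt_def]; omega
        simp [hbi, hai, haj, hUtri a j hja]
    · by_cases hbj : b = j
      · have hbv : (b : ℕ) = (j : ℕ) := by rw [hbj]
        have hai : ¬a = i := by intro h; rw [h] at hba'; omega
        have haj : ¬a = j := by intro h; rw [h] at hba'; omega
        have hia : i < a := by rw [Fin.lt_def]; omega
        have hja : j < a := by rw [Fin.lt_def]; omega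
        simp [hbi, hbj, hai, haj, hUtri a i hia, hUtri a j hja]
      · have hbvi : (b : ℕ) ≠ (i : ℕ) := fun h => hbi (Fin.ext h)
        have hbvj : (b : ℕ) ≠ (j : ℕ) := fun h => hbj (Fin.ext h)
        by_cases hai : a = i
        · have hav : (a : ℕ) = (i : ℕ) := by rw [hai]
          have hbj' : b < j := by rw [Fin.lt_def]; omega
          simp [hbi, hbj, hai, hUtri j b hbj']
        · by_cases haj : a = j
          · have hav : (a : ℕ) = (j : ℕ) := by rw [haj]
            have hbi' : b < i := by rw [Fin.lt_def]; omega
            have hbj' : b < j := by rw [Fin.lt_def]; omega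
            simp [hbi, hbj, hai, haj, hUtri i b hbi', hUtri j b hbj']
          · simp [hbi, hbj, hai, haj, hUtri a b hba]
  · intro a
    rw [hQ, hP, hP, hP]
    by_cases hai : a = i
    · simp [hai, hij, hUdiag]
    · by_cases haj : a = j
      · simp [hai, haj, Ne.symm hij, hUdiag,
          hUtri j i (show i < j by rw [Fin.lt_def]; omega)]
        try ring
      · simp [hai, haj, hUdiag]
end
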